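/- Let L be a latin square of order n and let C = {c_1, …, c_m} be a critical set of L. For each i define S_i = { T ∈ T_L : c_i ∈ T }. Then the family S_1, …, S_m has a system of distinct representatives; that is, there exists an injective function f : {1, …, m} → T_L with f(i) ∈ S_i for each i. -/

import Mathlib

/-- A triple (row, column, entry) with all coordinates in `{0, …, n-1}`. -/
abbrev Triple (n : ℕ) := Fin n × Fin n × Fin n

/-- A partial latin square of order `n`: no two distinct triples agree in two coordinates. -/
def IsPLS {n : ℕ} (P : Finset (Triple n)) : Prop :=
  ∀ a ∈ P, ∀ b ∈ P,
    ((a.1 = b.1 ∧ a.2.1 = b.2.1) ∨ (a.1 = b.1 ∧ a.2.2 = b.2.2) ∨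
      (a.2.1 = b.2.1 ∧ a.2.2 = b.2.2)) → a = b

/-- A latin square of order `n`: a partial latin square with every cell filled. -/
def IsLS {n : ℕ} (L : Finset (Triple n)) : Prop :=
  IsPLS L ∧ ∀ r c : Fin n, ∃ e : Fin n, (r, c, e) ∈ L

/-- Condition (R2): for every triple of `T₁` and every pair of coordinates,
there is a unique triple of `T₂` agreeing with it in those two coordinates.
(Condition (R3) is `R2cond T₂ T₁`.) -/
def R2cond {n : ℕ} (T₁ T₂ : Finset (Triple n)) : Prop :=
  ∀ a ∈ T₁,
    (∃! b, b ∈ T₂ ∧ b.1 = a.1 ∧ b.2.1 = a.2.1) ∧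
    (∃! b, b ∈ T₂ ∧ b.1 = a.1 ∧ b.2.2 = a.2.2) ∧
    (∃! b, b ∈ T₂ ∧ b.2.1 = a.2.1 ∧ b.2.2 = a.2.2)

/-- A latin bitrade `(T₁, T₂)`: a pair of partial latin squares satisfying
(R1) disjointness, (R2) and (R3). -/
def IsBitrade {n : ℕ} (T₁ T₂ : Finset (Triple n)) : Prop :=
  IsPLS T₁ ∧ IsPLS T₂ ∧ T₁ ∩ T₂ = ∅ ∧ R2cond T₁ T₂ ∧ R2cond T₂ T₁

/-- The trade space of `L`: nonempty subsets `T ⊆ L` forming a bitrade with some disjoint mate. -/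
def TradeSpace {n : ℕ} (L : Finset (Triple n)) : Set (Finset (Triple n)) :=
  { T | T.Nonempty ∧ T ⊆ L ∧ ∃ T₂, IsBitrade T T₂ }

/-- `P` has unique completion to `L`: `L` is the only latin square of order `n` containing `P`. -/
def UniquelyCompletes {n : ℕ} (P L : Finset (Triple n)) : Prop :=
  ∀ L', IsLS L' → P ⊆ L' → L' = L

/-- A critical set of `L`: a subset with unique completion to `L`, minimal with this property. -/
def IsCriticalSet {n : ℕ} (C L : Finset (Triple n)) : Prop :=
  C ⊆ L ∧ UniquelyCompletes C L ∧ ∀ C' ⊂ C, ¬ UniquelyCompletes C' L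

/-- A face of the simplicial complex `Δ(L)`: a finite nonempty collection of trades of `L`
sharing a common triple. -/
def IsFace {n : ℕ} (L : Finset (Triple n)) (F : Finset (Finset (Triple n))) : Prop :=
  F.Nonempty ∧ (∀ T ∈ F, T ∈ TradeSpace L) ∧ ∃ x : Triple n, ∀ T ∈ F, x ∈ T

/-- A facet of `Δ(L)`: a face maximal under inclusion. -/
def IsFacet {n : ℕ} (L : Finset (Triple n)) (F : Finset (Finset (Triple n))) : Prop :=
  IsFace L F ∧ ∀ F', IsFace L F' → F ⊆ F' → F' = F

/-- A vertex cover of `Δ(L)`: a set `A` of trades of `L` such that every facet is adjacent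
to some `a ∈ A` (i.e. some member of the facet meets `a`). -/
def IsVertexCover {n : ℕ} (L : Finset (Triple n)) (A : Finset (Finset (Triple n))) : Prop :=
  (∀ a ∈ A, a ∈ TradeSpace L) ∧
  ∀ F, IsFacet L F → ∃ a ∈ A, ∃ T ∈ F, (T ∩ a).Nonempty

/-- A minimal vertex cover of `Δ(L)`. -/
def IsMinimalVertexCover {n : ℕ} (L : Finset (Triple n))
    (A : Finset (Finset (Triple n))) : Prop :=
  IsVertexCover L A ∧ ∀ A' ⊂ A, ¬ IsVertexCover L A'

/-!
For each `c ∈ C`, minimality of `C` gives a latin square `L_c ≠ L` containing `C \ {c}`; it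
cannot contain `c`, or `C ⊆ L_c` would force `L_c = L`. Two distinct latin squares differ by a
latin bitrade, so `T_c = L \ L_c` is a trade of `L` with `T_c ∩ C = {c}`, and `c ↦ T_c` is the
required system of distinct representatives.
-/

variable {n : ℕ}

lemma IsPLS.mono {P Q : Finset (Triple n)} (hQ : IsPLS Q) (h : P ⊆ Q) : IsPLS P :=
  fun a ha b hb hab => hQ a (h ha) b (h hb) hab

/-- In the application, `p b` says that `b` agrees with `a` in two fixed coordinates. -/
lemma existsUnique_mem_sdiff {L L' : Finset (Triple n)} {a : Triple n} (ha : a ∈ L \ L')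
    (p : Triple n → Prop) (hL : ∀ b ∈ L, p b → b = a)
    (hL' : ∀ b ∈ L', ∀ b' ∈ L', p b → p b' → b = b') (hex : ∃ b ∈ L', p b) :
    ∃! b, b ∈ L' \ L ∧ p b := by
  obtain ⟨b, hb, hpb⟩ := hex
  have hbL : b ∉ L := fun hbL => (Finset.mem_sdiff.mp ha).2 (hL b hbL hpb ▸ hb)
  exact ⟨b, ⟨Finset.mem_sdiff.mpr ⟨hb, hbL⟩, hpb⟩,
    fun b' ⟨hb', hpb'⟩ => hL' b' (Finset.mem_sdiff.mp hb').1 b hb hpb' hpb⟩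

namespace IsLS

variable {L L' : Finset (Triple n)}

lemma eq_of_subset (hL : IsLS L) (hL' : IsLS L') (h : L ⊆ L') : L = L' := by
  refine Finset.Subset.antisymm h fun a ha => ?_
  obtain ⟨e, he⟩ := hL.2 a.1 a.2.1
  rwa [← hL'.1 _ (h he) a ha (Or.inl ⟨rfl, rfl⟩)]

lemma exists_col (hL : IsLS L) (r e : Fin n) : ∃ c, (r, c, e) ∈ L := by
  choose g hg using hL.2 r
  have hinj : Function.Injective g := fun c₁ c₂ h =>
    congrArg (fun x => x.2.1) (hL.1 _ (hg c₁) _ (hg c₂) (Or.inr (Or.inl ⟨rfl, h⟩)))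
  obtain ⟨c, rfl⟩ := Finite.injective_iff_surjective.mp hinj e
  exact ⟨c, hg c⟩

lemma exists_row (hL : IsLS L) (c e : Fin n) : ∃ r, (r, c, e) ∈ L := by
  choose g hg using fun r => hL.2 r c
  have hinj : Function.Injective g := fun r₁ r₂ h =>
    congrArg Prod.fst (hL.1 _ (hg r₁) _ (hg r₂) (Or.inr (Or.inr ⟨rfl, h⟩)))
  obtain ⟨r, rfl⟩ := Finite.injective_iff_surjective.mp hinj e
  exact ⟨r, hg r⟩

lemma r2cond_sdiff (hL : IsLS L) (hL' : IsLS L') : R2cond (L \ L') (L' \ L) := by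
  intro a ha
  have haL := (Finset.mem_sdiff.mp ha).1
  refine ⟨existsUnique_mem_sdiff ha _ (fun b hb h => hL.1 b hb a haL (Or.inl h))
      (fun b hb b' hb' h h' => hL'.1 b hb b' hb' (Or.inl ⟨h.1.trans h'.1.symm, h.2.trans h'.2.symm⟩))
      ?_,
    existsUnique_mem_sdiff ha _ (fun b hb h => hL.1 b hb a haL (Or.inr (Or.inl h)))
      (fun b hb b' hb' h h' =>
        hL'.1 b hb b' hb' (Or.inr (Or.inl ⟨h.1.trans h'.1.symm, h.2.trans h'.2.symm⟩)))
      ?_,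
    existsUnique_mem_sdiff ha _ (fun b hb h => hL.1 b hb a haL (Or.inr (Or.inr h)))
      (fun b hb b' hb' h h' =>
        hL'.1 b hb b' hb' (Or.inr (Or.inr ⟨h.1.trans h'.1.symm, h.2.trans h'.2.symm⟩)))
      ?_⟩
  · obtain ⟨e, he⟩ := hL'.2 a.1 a.2.1
    exact ⟨_, he, rfl, rfl⟩
  · obtain ⟨c, hc⟩ := hL'.exists_col a.1 a.2.2
    exact ⟨_, hc, rfl, rfl⟩
  · obtain ⟨r, hr⟩ := hL'.exists_row a.2.1 a.2.2
    exact ⟨_, hr, rfl, rfl⟩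

lemma sdiff_mem_tradeSpace (hL : IsLS L) (hL' : IsLS L') (hne : L' ≠ L) :
    L \ L' ∈ TradeSpace L := by
  refine ⟨Finset.sdiff_nonempty.mpr fun h => hne (hL.eq_of_subset hL' h).symm,
    Finset.sdiff_subset, L' \ L, hL.1.mono Finset.sdiff_subset, hL'.1.mono Finset.sdiff_subset,
    ?_, hL.r2cond_sdiff hL', hL'.r2cond_sdiff hL⟩
  rw [Finset.eq_empty_iff_forall_notMem]
  exact fun x hx => (Finset.mem_sdiff.mp (Finset.mem_inter.mp hx).2).2
    (Finset.mem_sdiff.mp (Finset.mem_inter.mp hx).1).1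

end IsLS

lemma IsCriticalSet.exists_isLS_erase_subset_not_mem {C L : Finset (Triple n)}
    (hC : IsCriticalSet C L) {c : Triple n} (hc : c ∈ C) :
    ∃ L', IsLS L' ∧ C.erase c ⊆ L' ∧ c ∉ L' := by
  have h := hC.2.2 _ (Finset.erase_ssubset hc)
  simp only [UniquelyCompletes, not_forall] at h
  obtain ⟨L', hL', hsub, hne⟩ := h
  refine ⟨L', hL', hsub, fun hcL' => hne (hC.2.1 L' hL' fun x hx => ?_)⟩
  obtain rfl | hxc := eq_or_ne x c
  · exact hcL'
  · exact hsub (Finset.mem_erase.mpr ⟨hxc, hx⟩)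

/-- The family of sets `S_c = {T ∈ T_L : c ∈ T}`, indexed by the entries `c` of a critical
set `C`, has a system of distinct representatives. -/
theorem critical_set_has_sdr {n : ℕ} (L C : Finset (Triple n))
    (hL : IsLS L) (hC : IsCriticalSet C L) :
    ∃ f : Triple n → Finset (Triple n),
      (∀ c ∈ C, f c ∈ TradeSpace L ∧ c ∈ f c) ∧ Set.InjOn f ↑C := by
  choose! L' hL' hsub hnot using fun c (hc : c ∈ C) => hC.exists_isLS_erase_subset_not_mem hc
  have hmem : ∀ c ∈ C, c ∈ L \ L' c := fun c hc => Finset.mem_sdiff.mpr ⟨hC.1 hc, hnot c hc⟩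
  refine ⟨fun c => L \ L' c, fun c hc => ⟨hL.sdiff_mem_tradeSpace (hL' c hc) ?_, hmem c hc⟩, ?_⟩
  · exact fun h => hnot c hc (h ▸ hC.1 hc)
  · intro c hc d hd hcd
    by_contra hne
    have hc_notin : c ∉ L \ L' d := fun h =>
      (Finset.mem_sdiff.mp h).2 (hsub d hd (Finset.mem_erase.mpr ⟨hne, hc⟩))
    exact hc_notin ((show L \ L' c = L \ L' d from hcd) ▸ hmem c hc)
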